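/- arXiv:2501.15325 — 3 statements merged into one kernel-verified Lean document; each statement's English description precedes it below -/
import Mathlib

section
/- Let S be a signature of constants and binary operations and T a skew commutative, skew associative equational theory over S. Then skew associativity also holds in reverse: for all binary operations σ1, σ2 ∈ S there exist binary operations σ1'', σ2'' ∈ S such that T ⊢ σ1(σ2(x, y), z) = σ1''(x, σ2''(y, z)). -/
/-- Terms over a signature consisting of constants (from `Cst`) and binary operations
(from `Bin`), with variables from `X`. -/
inductive Tm (Cst Bin X : Type) : Type where
  | var : X → Tm Cst Bin X
  | const : Cst → Tm Cst Bin X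
  | op : Bin → Tm Cst Bin X → Tm Cst Bin X → Tm Cst Bin X

/-- Substitution of terms for variables. -/
def Tm.subst {Cst Bin X Y : Type} : Tm Cst Bin X → (X → Tm Cst Bin Y) → Tm Cst Bin Y
  | .var x, ν => ν x
  | .const c, _ => .const c
  | .op σ t1 t2, ν => .op σ (t1.subst ν) (t2.subst ν)

/-- Derivability `T ⊢ t = s` of equations between terms (over any variable set) from the
set of axioms `E` (equations between terms over the variables `ℕ`) using the laws of
equational logic: axiom instances, reflexivity, symmetry, transitivity, substitution
and congruence. -/
inductive Deriv {Cst Bin : Type} (E : Tm Cst Bin ℕ → Tm Cst Bin ℕ → Prop) :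
    {X : Type} → Tm Cst Bin X → Tm Cst Bin X → Prop where
  | ax {X : Type} {t s : Tm Cst Bin ℕ} (ν : ℕ → Tm Cst Bin X) :
      E t s → Deriv E (t.subst ν) (s.subst ν)
  | refl {X : Type} (t : Tm Cst Bin X) : Deriv E t t
  | symm {X : Type} {t s : Tm Cst Bin X} : Deriv E t s → Deriv E s t
  | trans {X : Type} {t s u : Tm Cst Bin X} : Deriv E t s → Deriv E s u → Deriv E t u
  | subst {X Y : Type} {t s : Tm Cst Bin X} (ν : X → Tm Cst Bin Y) :
      Deriv E t s → Deriv E (t.subst ν) (s.subst ν)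
  | congr {X : Type} (σ : Bin) {t1 t2 s1 s2 : Tm Cst Bin X} :
      Deriv E t1 s1 → Deriv E t2 s2 → Deriv E (.op σ t1 t2) (.op σ s1 s2)

/-- The theory axiomatized by `E` is skew commutative: for every binary `σ` there is a
binary `τ` with `T ⊢ σ(x, y) = τ(y, x)`. -/
def SkewComm {Cst Bin : Type} (E : Tm Cst Bin ℕ → Tm Cst Bin ℕ → Prop) : Prop :=
  ∀ σ : Bin, ∃ τ : Bin,
    Deriv E (.op σ (.var 0) (.var 1)) (.op τ (.var 1) (.var 0))

/-- The theory axiomatized by `E` is skew associative: for all binary `σ1, σ2` there are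
binary `τ1, τ2` with `T ⊢ σ1(x, σ2(y, z)) = τ1(τ2(x, y), z)`. -/
def SkewAssoc {Cst Bin : Type} (E : Tm Cst Bin ℕ → Tm Cst Bin ℕ → Prop) : Prop :=
  ∀ σ1 σ2 : Bin, ∃ τ1 τ2 : Bin,
    Deriv E (.op σ1 (.var 0) (.op σ2 (.var 1) (.var 2)))
            (.op τ1 (.op τ2 (.var 0) (.var 1)) (.var 2))

/-- All variables occurring in the term lie in the set `U`. -/
def Tm.VarsIn {Cst Bin X : Type} : Tm Cst Bin X → Set X → Prop
  | .var x, U => x ∈ U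
  | .const _, _ => True
  | .op _ t1 t2, U => t1.VarsIn U ∧ t2.VarsIn U

lemma comm_inst {Cst Bin : Type} {E : Tm Cst Bin ℕ → Tm Cst Bin ℕ → Prop}
    (hc : SkewComm E) (σ : Bin) :
    ∃ τ : Bin, ∀ {X : Type} (t s : Tm Cst Bin X),
      Deriv E (.op σ t s) (.op τ s t) := by
  obtain ⟨τ, h⟩ := hc σ
  refine ⟨τ, fun {X} t s => ?_⟩
  have := Deriv.subst (fun n => if n = 0 then t else s) h
  simpa [Tm.subst] using this

lemma assoc_inst {Cst Bin : Type} {E : Tm Cst Bin ℕ → Tm Cst Bin ℕ → Prop}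
    (ha : SkewAssoc E) (σ1 σ2 : Bin) :
    ∃ τ1 τ2 : Bin, ∀ {X : Type} (t s u : Tm Cst Bin X),
      Deriv E (.op σ1 t (.op σ2 s u)) (.op τ1 (.op τ2 t s) u) := by
  obtain ⟨τ1, τ2, h⟩ := ha σ1 σ2
  refine ⟨τ1, τ2, fun {X} t s u => ?_⟩
  have := Deriv.subst (fun n => if n = 0 then t else if n = 1 then s else u) h
  simpa [Tm.subst] using this

/-- In a skew commutative, skew associative theory, skew associativity also holds in
reverse: for all binary `σ1, σ2` there are binary `σ1'', σ2''` with
`T ⊢ σ1(σ2(x, y), z) = σ1''(x, σ2''(y, z))`. -/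
theorem skew_assoc_reverse {Cst Bin : Type}
    (E : Tm Cst Bin ℕ → Tm Cst Bin ℕ → Prop)
    (hc : SkewComm E) (ha : SkewAssoc E) :
    ∀ σ1 σ2 : Bin, ∃ σ1'' σ2'' : Bin,
      Deriv E (.op σ1 (.op σ2 (.var 0) (.var 1)) (.var 2))
              (.op σ1'' (.var 0) (.op σ2'' (.var 1) (.var 2))) := by
  intro σ1 σ2
  obtain ⟨τa, ha1⟩ := comm_inst hc σ1
  obtain ⟨τb, hb1⟩ := comm_inst hc σ2
  obtain ⟨ρ1, ρ2, hr⟩ := assoc_inst ha τa τb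
  obtain ⟨ρ1', h1'⟩ := comm_inst hc ρ1
  obtain ⟨ρ2', h2'⟩ := comm_inst hc ρ2
  refine ⟨ρ1', ρ2', ?_⟩
  have s1 : Deriv E (.op σ1 (.op σ2 (.var 0) (.var 1)) (.var 2))
      (.op τa (.var 2) (.op σ2 (.var 0) (.var 1))) := ha1 _ _
  have s2 : Deriv E (.op τa (.var 2) (.op σ2 (.var 0) (.var 1)))
      (.op τa (.var 2) (.op τb (.var 1) (.var 0))) :=
    Deriv.congr τa (Deriv.refl _) (hb1 _ _)
  have s3 : Deriv E (.op τa (.var 2) (.op τb (.var 1) (.var 0)))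
      (.op ρ1 (.op ρ2 (.var 2) (.var 1)) (.var 0)) := hr _ _ _
  have s4 : Deriv E (.op ρ1 (.op ρ2 (.var 2) (.var 1)) (.var 0))
      (.op ρ1' (.var 0) (.op ρ2 (.var 2) (.var 1))) := h1' _ _
  have s5 : Deriv E (.op ρ1' (.var 0) (.op ρ2 (.var 2) (.var 1)))
      (.op ρ1' (.var 0) (.op ρ2' (.var 1) (.var 2))) :=
    Deriv.congr ρ1' (Deriv.refl _) (h2' _ _)
  exact s1.trans (s2.trans (s3.trans (s4.trans s5)))
end

section
/- Let S be a signature of constants and binary operations and T a skew commutative, skew associative equational theory over S. Let t be an S-term with appearance sequence (x1, …, xn). Then for every i < n there is an S-term t' such that T ⊢ t = t' and the appearance sequence of t' is (x1, …, x_{i+1}, x_i, …, x_n), i.e., the sequence obtained from (x1, …, xn) by swapping the i-th and (i+1)-th entries. -/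
/-- The appearance sequence of a term: the occurrences of variables and constants,
listed from left to right. -/
def Tm.appSeq {Cst Bin X : Type} : Tm Cst Bin X → List (X ⊕ Cst)
  | .var x => [.inl x]
  | .const c => [.inr c]
  | .op _ t1 t2 => t1.appSeq ++ t2.appSeq

section Helpers

variable {Cst Bin X : Type} {E : Tm Cst Bin ℕ → Tm Cst Bin ℕ → Prop}

lemma Tm.appSeq_ne_nil (t : Tm Cst Bin X) : t.appSeq ≠ [] := by
  induction t with
  | var x => simp [Tm.appSeq]
  | const c => simp [Tm.appSeq]
  | op σ t1 t2 ih1 ih2 => simp [Tm.appSeq, ih1]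

lemma dcomm (hc : SkewComm E) (σ : Bin) (x y : Tm Cst Bin X) :
    ∃ τ, Deriv E (.op σ x y) (.op τ y x) := by
  obtain ⟨τ, h⟩ := hc σ
  refine ⟨τ, ?_⟩
  have := h.subst (fun n => if n = 0 then x else y)
  simpa [Tm.subst] using this

lemma dassocL (ha : SkewAssoc E) (σ1 σ2 : Bin) (x y z : Tm Cst Bin X) :
    ∃ τ1 τ2, Deriv E (.op σ1 x (.op σ2 y z)) (.op τ1 (.op τ2 x y) z) := by
  obtain ⟨τ1, τ2, h⟩ := ha σ1 σ2
  refine ⟨τ1, τ2, ?_⟩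
  have := h.subst (fun n => if n = 0 then x else if n = 1 then y else z)
  simpa [Tm.subst] using this

lemma dassocR (hc : SkewComm E) (ha : SkewAssoc E) (σ1 σ2 : Bin) (x y z : Tm Cst Bin X) :
    ∃ τ1 τ2, Deriv E (.op σ1 (.op σ2 x y) z) (.op τ1 x (.op τ2 y z)) := by
  obtain ⟨π1, h1⟩ := dcomm hc σ1 (.op σ2 x y) z
  obtain ⟨ρ1, ρ2, h2⟩ := dassocL ha π1 σ2 z x y
  obtain ⟨π2, h3⟩ := dcomm hc ρ1 (.op ρ2 z x) y
  obtain ⟨θ1, θ2, h4⟩ := dassocL ha π2 ρ2 y z x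
  obtain ⟨π3, h5⟩ := dcomm hc θ1 (.op θ2 y z) x
  exact ⟨π3, θ2, (((h1.trans h2).trans h3).trans h4).trans h5⟩

lemma firstExtract (hc : SkewComm E) (ha : SkewAssoc E) :
    ∀ (t : Tm Cst Bin X) (b : X ⊕ Cst) (l : List (X ⊕ Cst)),
      t.appSeq = b :: l → l ≠ [] →
      ∃ (τ : Bin) (u s : Tm Cst Bin X),
        Deriv E t (.op τ u s) ∧ u.appSeq = [b] ∧ s.appSeq = l := by
  intro t
  induction t with
  | var x =>
    intro b l h hl
    simp only [Tm.appSeq] at h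
    injection h with h1 h2
    exact absurd h2.symm hl
  | const c =>
    intro b l h hl
    simp only [Tm.appSeq] at h
    injection h with h1 h2
    exact absurd h2.symm hl
  | op σ t1 t2 ih1 ih2 =>
    intro b l h hl
    simp only [Tm.appSeq] at h
    rcases hs1 : t1.appSeq with _ | ⟨b', s1'⟩
    · exact absurd hs1 (Tm.appSeq_ne_nil t1)
    rw [hs1, List.cons_append] at h
    injection h with h1 h2
    cases s1' with
    | nil =>
      refine ⟨σ, t1, t2, Deriv.refl _, by rw [hs1, h1], by simpa using h2⟩
    | cons d s1'' =>
      obtain ⟨τ, u, s, hd, hu, hs⟩ := ih1 b' (d :: s1'') hs1 (by simp)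
      rw [h1] at hu
      obtain ⟨π1, π2, hA⟩ := dassocR hc ha σ τ u s t2
      refine ⟨π1, u, .op π2 s t2, ?_, hu, ?_⟩
      · exact (Deriv.congr σ hd (Deriv.refl t2)).trans hA
      · simpa [Tm.appSeq, hs] using h2

lemma swap2 (hc : SkewComm E) (ha : SkewAssoc E) :
    ∀ (t : Tm Cst Bin X) (a b : X ⊕ Cst) (l : List (X ⊕ Cst)),
      t.appSeq = a :: b :: l →
      ∃ t', Deriv E t t' ∧ t'.appSeq = b :: a :: l := by
  intro t
  induction t with
  | var x => intro a b l h; simp only [Tm.appSeq] at h; injection h with h1 h2; simp at h2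
  | const c => intro a b l h; simp only [Tm.appSeq] at h; injection h with h1 h2; simp at h2
  | op σ t1 t2 ih1 ih2 =>
    intro a b l h
    simp only [Tm.appSeq] at h
    rcases hs1 : t1.appSeq with _ | ⟨a', s1'⟩
    · exact absurd hs1 (Tm.appSeq_ne_nil t1)
    rw [hs1, List.cons_append] at h
    injection h with h1 h2
    cases s1' with
    | nil =>
      simp only [List.nil_append] at h2
      rcases l with _ | ⟨d, l'⟩
      · obtain ⟨τ, hd⟩ := dcomm hc σ t1 t2
        refine ⟨.op τ t2 t1, hd, ?_⟩
        simp [Tm.appSeq, hs1, h2, h1]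
      · obtain ⟨τ, u, s, hd, hu, hs⟩ := firstExtract hc ha t2 b (d :: l') h2 (by simp)
        obtain ⟨π1, π2, hA⟩ := dassocL ha σ τ t1 u s
        obtain ⟨π3, hC⟩ := dcomm hc π2 t1 u
        refine ⟨.op π1 (.op π3 u t1) s, ?_, ?_⟩
        · exact ((Deriv.congr σ (Deriv.refl t1) hd).trans hA).trans
            (Deriv.congr π1 hC (Deriv.refl s))
        · simp [Tm.appSeq, hu, hs1, hs, h1]
    | cons a'' s1'' =>
      rw [List.cons_append] at h2
      injection h2 with h2 h3
      obtain ⟨t1', hd, hs⟩ := ih1 a' a'' s1'' hs1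
      refine ⟨.op σ t1' t2, Deriv.congr σ hd (Deriv.refl t2), ?_⟩
      simp [Tm.appSeq, hs, ← h3, h1, h2]

end Helpers

/-- In a skew commutative, skew associative theory, adjacent entries of the appearance
sequence can be swapped: if the appearance sequence of `t` is `(x1, …, xn)`, then for
every `i < n` there is a term `t'` with `T ⊢ t = t'` whose appearance sequence is
obtained by swapping the `i`-th and `(i+1)`-th entries. -/
theorem appearance_sequence_swap {Cst Bin X : Type}
    (E : Tm Cst Bin ℕ → Tm Cst Bin ℕ → Prop)
    (hc : SkewComm E) (ha : SkewAssoc E)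
    (t : Tm Cst Bin X) (i : ℕ) (hi : i + 1 < t.appSeq.length) :
    ∃ (t' : Tm Cst Bin X) (l1 l2 : List (X ⊕ Cst)) (a b : X ⊕ Cst),
      l1.length = i ∧
      t.appSeq = l1 ++ a :: b :: l2 ∧
      Deriv E t t' ∧
      t'.appSeq = l1 ++ b :: a :: l2 := by
  induction i generalizing t with
  | zero =>
    rcases h : t.appSeq with _ | ⟨a, _ | ⟨b, l⟩⟩
    · exact absurd h (Tm.appSeq_ne_nil t)
    · rw [h] at hi; simp at hi
    · obtain ⟨t', hd, hs⟩ := swap2 hc ha t a b l h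
      exact ⟨t', [], l, a, b, rfl, rfl, hd, hs⟩
  | succ i ih =>
    rcases h : t.appSeq with _ | ⟨c, l⟩
    · exact absurd h (Tm.appSeq_ne_nil t)
    · have hlen : i + 1 < l.length := by
        rw [h] at hi; simpa using hi
      have hl : l ≠ [] := by
        intro hnil; rw [hnil] at hlen; simp at hlen
      obtain ⟨τ, u, s, hd, hu, hs⟩ := firstExtract hc ha t c l h hl
      have hi' : i + 1 < s.appSeq.length := by rw [hs]; exact hlen
      obtain ⟨s', l1, l2, a, b, hl1, hseq, hd2, hseq'⟩ := ih s hi'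
      refine ⟨.op τ u s', c :: l1, l2, a, b, by simp [hl1], ?_, ?_, ?_⟩
      · rw [← hs, hseq]; rfl
      · exact hd.trans (Deriv.congr τ (Deriv.refl u) hd2)
      · simp [Tm.appSeq, hu, hseq']
end

section
/- The theory CS of convex semilattices is not malleable. Concretely, for distinct variables x, y, z there exist no CS-terms t1 over {x, y}, t2 over {z}, and two-variable term s = s(u, v) such that CS ⊢ x + (y ⊕_{1/2} z) = s(t1, t2). -/
/-- Terms of the theory CS of convex semilattices over variables `X`: the constant `0`,
the binary semilattice operation `+`, and a binary convex operation `⊕p` for each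
`p ∈ [0, 1]`. -/
inductive CSTm (X : Type) : Type where
  | var : X → CSTm X
  | zero : CSTm X
  | add : CSTm X → CSTm X → CSTm X
  | conv : unitInterval → CSTm X → CSTm X → CSTm X

/-- Substitution of terms for variables. -/
def CSTm.subst {X Y : Type} : CSTm X → (X → CSTm Y) → CSTm Y
  | .var x, ν => ν x
  | .zero, _ => .zero
  | .add t s, ν => .add (t.subst ν) (s.subst ν)
  | .conv p t s, ν => .conv p (t.subst ν) (s.subst ν)

/-- All variables occurring in the term lie in the set `U`. -/
def CSTm.VarsIn {X : Type} : CSTm X → Set X → Prop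
  | .var x, U => x ∈ U
  | .zero, _ => True
  | .add t s, U => t.VarsIn U ∧ s.VarsIn U
  | .conv _ t s, U => t.VarsIn U ∧ s.VarsIn U

/-- Derivability `CS ⊢ t = s` from the axioms of convex semilattices (semilattice with
bottom, convex algebra, and the distributive law `x ⊕p (y + z) = (x ⊕p y) + (x ⊕p z)`)
together with the laws of equational logic.  In `conv_assoc`, the parameter
`r = q(1−p)/(1−pq)` is characterized by `r·(1−pq) = q·(1−p)`, which determines it since
`pq < 1`. -/
inductive CSEq {X : Type} : CSTm X → CSTm X → Prop where
  | add_zero (t : CSTm X) : CSEq (t.add .zero) t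
  | add_idem (t : CSTm X) : CSEq (t.add t) t
  | add_comm (t s : CSTm X) : CSEq (t.add s) (s.add t)
  | add_assoc (t s u : CSTm X) : CSEq (t.add (s.add u)) ((t.add s).add u)
  | conv_one (t s : CSTm X) : CSEq (.conv 1 t s) t
  | conv_idem (p : unitInterval) (t : CSTm X) : CSEq (.conv p t t) t
  | conv_comm (p : unitInterval) (t s : CSTm X) :
      CSEq (.conv p t s) (.conv (unitInterval.symm p) s t)
  | conv_assoc (p q r : unitInterval) (t s u : CSTm X) :
      (p : ℝ) * (q : ℝ) < 1 →
      (r : ℝ) * (1 - (p : ℝ) * (q : ℝ)) = (q : ℝ) * (1 - (p : ℝ)) →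
      CSEq (.conv q (.conv p t s) u) (.conv (p * q) t (.conv r s u))
  | distrib (p : unitInterval) (t s u : CSTm X) :
      CSEq (.conv p t (s.add u)) ((CSTm.conv p t s).add (.conv p t u))
  | refl (t : CSTm X) : CSEq t t
  | symm {t s : CSTm X} : CSEq t s → CSEq s t
  | trans {t s u : CSTm X} : CSEq t s → CSEq s u → CSEq t u
  | add_congr {t t' s s' : CSTm X} : CSEq t t' → CSEq s s' → CSEq (t.add s) (t'.add s')
  | conv_congr (p : unitInterval) {t t' s s' : CSTm X} :
      CSEq t t' → CSEq s s' → CSEq (.conv p t s) (.conv p t' s')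


/-! ### Auxiliary: a real-valued model of CS -/

noncomputable def CSTm.eval {X : Type} (v : X → ℝ) : CSTm X → ℝ
  | .var x => v x
  | .zero => 0
  | .add t s => max (t.eval v) (s.eval v)
  | .conv p t s => (p : ℝ) * t.eval v + (1 - (p : ℝ)) * s.eval v

lemma CSTm.eval_nonneg {X : Type} {v : X → ℝ} (hv : ∀ x, 0 ≤ v x) (t : CSTm X) :
    0 ≤ t.eval v := by
  induction t with
  | var x => exact hv x
  | zero => exact le_refl 0
  | add t s ht hs => exact le_max_of_le_left ht
  | conv p t s ht hs =>
    have h1 : (0:ℝ) ≤ (p:ℝ) := p.2.1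
    have h2 : (p:ℝ) ≤ 1 := p.2.2
    have := mul_nonneg h1 ht
    have := mul_nonneg (by linarith : (0:ℝ) ≤ 1 - (p:ℝ)) hs
    simp only [eval]; linarith

lemma CSTm.eval_le {X : Type} {v : X → ℝ} {c : ℝ} (hv : ∀ x, v x ≤ c) (hc : 0 ≤ c)
    (t : CSTm X) : t.eval v ≤ c := by
  induction t with
  | var x => exact hv x
  | zero => exact hc
  | add t s ht hs => exact max_le ht hs
  | conv p t s ht hs =>
    have h1 : (0:ℝ) ≤ (p:ℝ) := p.2.1
    have h2 : (p:ℝ) ≤ 1 := p.2.2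
    have := mul_le_mul_of_nonneg_left ht h1
    have := mul_le_mul_of_nonneg_left hs (by linarith : (0:ℝ) ≤ 1 - (p:ℝ))
    simp only [eval]; nlinarith

lemma CSTm.eval_smul {X : Type} {r : ℝ} (hr : 0 ≤ r) (v : X → ℝ) (t : CSTm X) :
    t.eval (fun x => r * v x) = r * t.eval v := by
  induction t with
  | var x => rfl
  | zero => simp [eval]
  | add t s ht hs =>
    simp only [eval, ht, hs]
    rcases le_total (t.eval v) (s.eval v) with h | h
    · rw [max_eq_right h, max_eq_right (by nlinarith)]
    · rw [max_eq_left h, max_eq_left (by nlinarith)]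
  | conv p t s ht hs => simp only [eval, ht, hs]; ring

lemma CSTm.eval_congr {X : Type} {U : Set X} {v v' : X → ℝ}
    (hv : ∀ x ∈ U, v x = v' x) (t : CSTm X) (ht : t.VarsIn U) :
    t.eval v = t.eval v' := by
  induction t with
  | var x => exact hv x ht
  | zero => rfl
  | add t s iht ihs => simp only [eval, iht ht.1, ihs ht.2]
  | conv p t s iht ihs => simp only [eval, iht ht.1, ihs ht.2]

lemma CSTm.eval_subst {X Y : Type} (v : Y → ℝ) (ν : X → CSTm Y) (t : CSTm X) :
    (t.subst ν).eval v = t.eval (fun x => (ν x).eval v) := by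
  induction t with
  | var x => rfl
  | zero => rfl
  | add t s iht ihs => simp only [subst, eval, iht, ihs]
  | conv p t s iht ihs => simp only [subst, eval, iht, ihs]

/-- Soundness of the model. -/
lemma CSEq.eval_eq {X : Type} {t s : CSTm X} (h : CSEq t s) {v : X → ℝ}
    (hv : ∀ x, 0 ≤ v x) : t.eval v = s.eval v := by
  induction h with
  | add_zero t => exact max_eq_left (t.eval_nonneg hv)
  | add_idem t => exact max_self _
  | add_comm t s => exact max_comm _ _
  | add_assoc t s u => exact (max_assoc _ _ _).symm
  | conv_one t s => simp [CSTm.eval]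
  | conv_idem p t => simp only [CSTm.eval]; ring
  | conv_comm p t s =>
    simp only [CSTm.eval, unitInterval.coe_symm_eq]; ring
  | conv_assoc p q r t s u hpq hr =>
    simp only [CSTm.eval]
    push_cast
    linear_combination (u.eval v - s.eval v) * hr
  | distrib p t s u =>
    have h1 : (0:ℝ) ≤ (p:ℝ) := p.2.1
    have h2 : (p:ℝ) ≤ 1 := p.2.2
    simp only [CSTm.eval]
    rcases le_total (s.eval v) (u.eval v) with h | h
    · rw [max_eq_right h, max_eq_right (by nlinarith)]
    · rw [max_eq_left h, max_eq_left (by nlinarith)]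
  | refl t => rfl
  | symm _ ih => exact ih.symm
  | trans _ _ ih1 ih2 => exact ih1.trans ih2
  | add_congr _ _ ih1 ih2 => simp only [CSTm.eval, ih1, ih2]
  | conv_congr p _ _ ih1 ih2 => simp only [CSTm.eval, ih1, ih2]

/-- The theory CS of convex semilattices is not malleable: for distinct variables
`x, y, z` there are no CS-terms `t1` over `{x, y}`, `t2` over `{z}`, and a two-variable
term `s(u, v)` (a term over `Bool`, with `u = true` and `v = false`) such that
`CS ⊢ x + (y ⊕_{1/2} z) = s(t1, t2)`. -/
theorem cs_not_malleable {X : Type} (x y z : X)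
    (hxy : x ≠ y) (hxz : x ≠ z) (hyz : y ≠ z) :
    ¬ ∃ (t1 t2 : CSTm X) (s : CSTm Bool),
        t1.VarsIn {x, y} ∧ t2.VarsIn {z} ∧
        CSEq ((CSTm.var x).add
               (.conv (⟨1/2, by norm_num⟩ : unitInterval) (.var y) (.var z)))
             (s.subst (fun b => if b then t1 else t2)) := by
  classical
  rintro ⟨t1, t2, s, h1, h2, heq⟩
  -- valuation sending x ↦ a, y ↦ b, z ↦ c, all else to 0
  set val : ℝ → ℝ → ℝ → X → ℝ := fun a b c w =>
    if w = x then a else if w = y then b else if w = z then c else 0 with hval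
  set Sf : ℝ → ℝ → ℝ := fun u w => CSTm.eval (fun bb : Bool => if bb then u else w) s
    with hSf
  set T1 : ℝ → ℝ → ℝ := fun a b => t1.eval (val a b 0) with hT1
  set T2 : ℝ → ℝ := fun c => t2.eval (val 0 0 c) with hT2
  have hvx : ∀ a b c : ℝ, val a b c x = a := by intro a b c; simp [hval]
  have hvy : ∀ a b c : ℝ, val a b c y = b := by
    intro a b c; simp [hval, if_neg (Ne.symm hxy)]
  have hvz : ∀ a b c : ℝ, val a b c z = c := by
    intro a b c; simp [hval, if_neg (Ne.symm hxz), if_neg (Ne.symm hyz)]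
  have hvnn : ∀ a b c : ℝ, 0 ≤ a → 0 ≤ b → 0 ≤ c → ∀ w, 0 ≤ val a b c w := by
    intro a b c ha hb hc w
    simp only [hval]
    split_ifs <;> first | assumption | exact le_rfl
  -- the central factorization identity
  have main : ∀ a b c : ℝ, 0 ≤ a → 0 ≤ b → 0 ≤ c →
      max a (b/2 + c/2) = Sf (T1 a b) (T2 c) := by
    intro a b c ha hb hc
    have h := heq.eval_eq (hvnn a b c ha hb hc)
    rw [CSTm.eval_subst] at h
    have hfun : (fun bb : Bool => ((if bb then t1 else t2) : CSTm X).eval (val a b c))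
        = fun bb : Bool => if bb then T1 a b else T2 c := by
      funext bb
      cases bb
      · simp only [if_false, hT2]
        refine CSTm.eval_congr (U := {z}) ?_ t2 h2
        intro w hw
        rw [Set.mem_singleton_iff] at hw
        subst hw
        rw [hvz, hvz]
      · simp only [if_true, hT1]
        refine CSTm.eval_congr (U := {x, y}) ?_ t1 h1
        intro w hw
        rcases hw with hw | hw
        · subst hw; rw [hvx, hvx]
        · rw [Set.mem_singleton_iff] at hw; subst hw; rw [hvy, hvy]
    rw [hfun] at h
    simp only [CSTm.eval] at h
    rw [hvx, hvy, hvz] at h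
    have h' : a ⊔ (1/2*b + (1-1/2)*c) = Sf (T1 a b) (T2 c) := h
    rw [← h']
    congr 1
    ring
  -- basic facts about the pieces
  have hT1nn : ∀ a b : ℝ, 0 ≤ a → 0 ≤ b → 0 ≤ T1 a b := by
    intro a b ha hb
    exact CSTm.eval_nonneg (hvnn a b 0 ha hb le_rfl) t1
  have hT2zero : T2 0 = 0 := by
    refine le_antisymm (CSTm.eval_le ?_ le_rfl t2)
      (CSTm.eval_nonneg (hvnn 0 0 0 le_rfl le_rfl le_rfl) t2)
    intro w
    simp only [hval]
    split_ifs <;> exact le_rfl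
  have hb0le : T1 1 0 ≤ 1 := by
    refine CSTm.eval_le ?_ zero_le_one t1
    intro w
    simp only [hval]
    split_ifs <;> norm_num
  have hSfle : ∀ u w : ℝ, 0 ≤ u → 0 ≤ w → Sf u w ≤ max u w := by
    intro u w hu hw
    refine CSTm.eval_le ?_ (le_max_of_le_left hu) s
    intro bb
    cases bb
    · exact le_max_right u w
    · exact le_max_left u w
  have hhom : ∀ a : ℝ, 0 ≤ a → T1 a 0 = a * T1 1 0 := by
    intro a ha
    have hveq : val a 0 0 = fun w => a * val 1 0 0 w := by
      funext w
      simp only [hval]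
      split_ifs <;> ring
    simp only [hT1]
    rw [hveq, CSTm.eval_smul ha]
  have key1 : ∀ a : ℝ, 0 ≤ a → Sf (a * T1 1 0) 0 = a := by
    intro a ha
    have h := main a 0 0 ha le_rfl le_rfl
    rw [hT2zero, hhom a ha] at h
    rw [← h]
    norm_num [max_eq_left ha]
  have hb1 : T1 1 0 = 1 := by
    have h1 : Sf (T1 1 0) 0 = 1 := by
      have := key1 1 zero_le_one
      rwa [one_mul] at this
    refine le_antisymm hb0le ?_
    have h2 := hSfle (T1 1 0) 0 (hT1nn 1 0 zero_le_one le_rfl) le_rfl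
    rwa [h1, max_eq_left (hT1nn 1 0 zero_le_one le_rfl)] at h2
  have key2 : ∀ u : ℝ, 0 ≤ u → Sf u 0 = u := by
    intro u hu
    have := key1 u hu
    rwa [hb1, mul_one] at this
  have hT102 : T1 0 2 = 1 := by
    have h := main 0 2 0 le_rfl (by norm_num) le_rfl
    rw [hT2zero, key2 (T1 0 2) (hT1nn 0 2 le_rfl (by norm_num))] at h
    rw [← h]
    norm_num
  have e1 := main 0 2 2 le_rfl (by norm_num) (by norm_num)
  have e2 := main 1 0 2 zero_le_one le_rfl (by norm_num)
  rw [hT102] at e1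
  rw [hb1] at e2
  norm_num at e1 e2
  rw [← e2] at e1
  norm_num at e1
end
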